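/- Let (lambda_k)_{k>=1} be a sequence of positive real numbers, let c > 0, and suppose lambda_k >= c * k^{2/3} for all k >= 1. Let s be a real number with 0 <= s <= 1 and let alpha >= 0. Then for every integer N >= 1, sum_{k=1}^N lambda_k / (1 + (alpha * lambda_k)^s) >= (3/5) * c * N^{(5-2s)/3} / (1 + (alpha * c)^s). -/

import Mathlib

open Real Finset

private lemma mono_aux {s α a b : ℝ} (hs1 : s ≤ 1) (hα : 0 ≤ α)
    (ha : 0 < a) (hab : a ≤ b) :
    a / (1 + (α * a) ^ s) ≤ b / (1 + (α * b) ^ s) := by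
  have hb : 0 < b := ha.trans_le hab
  have hda : 0 < 1 + (α * a) ^ s := by positivity
  have hdb : 0 < 1 + (α * b) ^ s := by positivity
  rw [div_le_div_iff₀ hda hdb]
  have ha' : a ^ (1 - s) * a ^ s = a := by
    rw [← Real.rpow_add ha]; simp
  have hb' : b ^ (1 - s) * b ^ s = b := by
    rw [← Real.rpow_add hb]; simp
  have h1 : a ^ (1 - s) ≤ b ^ (1 - s) := Real.rpow_le_rpow ha.le hab (by linarith)
  have key : a * b ^ s ≤ b * a ^ s := by
    calc a * b ^ s = a ^ (1 - s) * (a ^ s * b ^ s) := by rw [← mul_assoc, ha']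
      _ ≤ b ^ (1 - s) * (a ^ s * b ^ s) := by
          apply mul_le_mul_of_nonneg_right h1; positivity
      _ = b * a ^ s := by rw [mul_comm (a ^ s) (b ^ s), ← mul_assoc, hb']
  have key2 : a * (α * b) ^ s ≤ b * (α * a) ^ s := by
    rw [Real.mul_rpow hα hb.le, Real.mul_rpow hα ha.le]
    calc a * (α ^ s * b ^ s) = α ^ s * (a * b ^ s) := by ring
      _ ≤ α ^ s * (b * a ^ s) := by
          apply mul_le_mul_of_nonneg_left key; positivity
      _ = b * (α ^ s * a ^ s) := by ring
  rw [mul_add, mul_add, mul_one, mul_one]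
  linarith

private lemma sum_rpow_aux {p : ℝ} (hp : 0 ≤ p) (N : ℕ) :
    (N : ℝ) ^ (p + 1) / (p + 1) ≤ ∑ k ∈ Finset.Icc 1 N, (k : ℝ) ^ p := by
  have hf : MonotoneOn (fun x : ℝ => x ^ p) (Set.Icc 0 (0 + (N:ℕ))) := by
    intro x hx y _ hxy
    exact Real.rpow_le_rpow hx.1 hxy hp
  have h := hf.integral_le_sum
  have hint : ∫ x in (0:ℝ)..((0:ℝ) + (N:ℕ)), x ^ p
      = (((0:ℝ) + (N:ℕ)) ^ (p + 1) - (0:ℝ) ^ (p + 1)) / (p + 1) :=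
    _root_.integral_rpow (Or.inl (by linarith))
  rw [hint] at h
  rw [Real.zero_rpow (by positivity), zero_add, sub_zero] at h
  refine h.trans_eq ?_
  rw [show Finset.Icc 1 N = Finset.Ico 1 (N+1) by rfl, Finset.sum_Ico_eq_sum_range]
  simp only [Nat.add_sub_cancel]
  apply Finset.sum_congr rfl
  intro i _
  push_cast
  ring_nf

/-- Proposition A.2 in abstract form: lower bound for the spectral sum
`ζ(α, s, N)` from a Berezin–Li–Yau type lower bound on the eigenvalues. -/
theorem zeta_spectral_sum_lower_bound
    (lam : ℕ → ℝ) (c : ℝ) (hc : 0 < c)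
    (hpos : ∀ k : ℕ, 1 ≤ k → 0 < lam k)
    (hlow : ∀ k : ℕ, 1 ≤ k → c * (k : ℝ) ^ ((2 : ℝ) / 3) ≤ lam k)
    (s α : ℝ) (hs0 : 0 ≤ s) (hs1 : s ≤ 1) (hα : 0 ≤ α)
    (N : ℕ) (hN : 1 ≤ N) :
    (3 / 5) * c * (N : ℝ) ^ ((5 - 2 * s) / 3) / (1 + (α * c) ^ s)
      ≤ ∑ k ∈ Finset.Icc 1 N, lam k / (1 + (α * lam k) ^ s) := by
  set β := (α * c) ^ s with hβdef
  have hβ : 0 ≤ β := Real.rpow_nonneg (by positivity) s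
  set p : ℝ := (2 - 2 * s) / 3 with hpdef
  have hp : 0 ≤ p := by rw [hpdef]; linarith
  -- per-term bound
  have hterm : ∀ k ∈ Finset.Icc 1 N,
      c * (k : ℝ) ^ p / (1 + β) ≤ lam k / (1 + (α * lam k) ^ s) := by
    intro k hk
    have hk1 : 1 ≤ k := (Finset.mem_Icc.mp hk).1
    have hk1' : (1 : ℝ) ≤ (k : ℝ) := by exact_mod_cast hk1
    have hkpos : (0 : ℝ) < (k : ℝ) := by linarith
    have ha : (0 : ℝ) < c * (k : ℝ) ^ ((2:ℝ)/3) := by positivity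
    have step1 : c * (k : ℝ) ^ ((2:ℝ)/3) / (1 + (α * (c * (k:ℝ) ^ ((2:ℝ)/3))) ^ s)
        ≤ lam k / (1 + (α * lam k) ^ s) :=
      mono_aux hs1 hα ha (hlow k hk1)
    refine le_trans ?_ step1
    have hq1 : (1 : ℝ) ≤ (k:ℝ) ^ (2*s/3) := Real.one_le_rpow hk1' (by positivity)
    have hrw : (α * (c * (k:ℝ) ^ ((2:ℝ)/3))) ^ s = β * (k:ℝ) ^ (2*s/3) := by
      rw [show α * (c * (k:ℝ) ^ ((2:ℝ)/3)) = (α * c) * (k:ℝ) ^ ((2:ℝ)/3) by ring,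
        Real.mul_rpow (by positivity) (by positivity), hβdef,
        ← Real.rpow_mul hkpos.le]
      ring_nf
    rw [hrw]
    have hden : 1 + β * (k:ℝ) ^ (2*s/3) ≤ (1 + β) * (k:ℝ) ^ (2*s/3) := by
      have : β * (k:ℝ) ^ (2*s/3) ≤ β * (k:ℝ) ^ (2*s/3) := le_refl _
      nlinarith
    have hdenpos : 0 < 1 + β * (k:ℝ) ^ (2*s/3) := by positivity
    have hdenpos2 : 0 < (1 + β) * (k:ℝ) ^ (2*s/3) := by positivity
    calc c * (k:ℝ) ^ p / (1 + β)
        = c * (k:ℝ) ^ ((2:ℝ)/3) / ((1 + β) * (k:ℝ) ^ (2*s/3)) := by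
          rw [div_mul_eq_div_div, eq_div_iff (by positivity), div_mul_eq_mul_div,
            mul_assoc, ← Real.rpow_add hkpos, div_eq_div_iff (by positivity) (by positivity)]
          rw [hpdef]; ring_nf
      _ ≤ c * (k:ℝ) ^ ((2:ℝ)/3) / (1 + β * (k:ℝ) ^ (2*s/3)) :=
          div_le_div_of_nonneg_left ha.le hdenpos hden
  -- sum up
  refine le_trans ?_ (Finset.sum_le_sum hterm)
  have hsum : ∑ k ∈ Finset.Icc 1 N, c * (k:ℝ) ^ p / (1 + β)
      = (c / (1 + β)) * ∑ k ∈ Finset.Icc 1 N, (k:ℝ) ^ p := by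
    rw [Finset.mul_sum]
    apply Finset.sum_congr rfl
    intro k _; ring
  rw [hsum]
  have h1 : (N:ℝ) ^ (p+1) / (p+1) ≤ ∑ k ∈ Finset.Icc 1 N, (k:ℝ) ^ p := sum_rpow_aux hp N
  have hNpos : (0:ℝ) < (N:ℝ) := by exact_mod_cast hN
  have hp1 : p + 1 = (5 - 2*s)/3 := by rw [hpdef]; ring
  have h2 : (3/5) * (N:ℝ) ^ ((5 - 2*s)/3) ≤ (N:ℝ) ^ (p+1) / (p+1) := by
    rw [hp1]
    have hpow : (0:ℝ) < (N:ℝ) ^ ((5 - 2*s)/3) := Real.rpow_pos_of_pos hNpos _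
    rw [le_div_iff₀ (by linarith)]
    nlinarith [hpow.le]
  calc (3/5) * c * (N:ℝ) ^ ((5 - 2*s)/3) / (1 + β)
      = (c / (1 + β)) * ((3/5) * (N:ℝ) ^ ((5 - 2*s)/3)) := by ring
    _ ≤ (c / (1 + β)) * ((N:ℝ) ^ (p+1) / (p+1)) := by
        apply mul_le_mul_of_nonneg_left h2; positivity
    _ ≤ (c / (1 + β)) * ∑ k ∈ Finset.Icc 1 N, (k:ℝ) ^ p := by
        apply mul_le_mul_of_nonneg_left h1; positivity
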